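/- In the universe D(A) generated by the closed set A of Left dead-ends, an augmented or ordinary game G is Left U-strong (Left wins moving first on G + X for every Left end X in the universe) if and only if Left wins moving first on G + X for every X in the n-th test set T_n(A), where n = fb(G) is the formal birthday of G and T_n(A) is the set of minimal elements (under the dead-end order) of {τ_n(X) : X in the additive-hereditary closure of A}. -/

import Mathlib

/-- A (finite) partizan game: finite lists of Left and Right options. -/
inductive Gm : Type where
  | node : List Gm → List Gm → Gm

/-- The Left options of a game. -/
def Gm.leftOpts : Gm → List Gm
  | .node l _ => l

/-- The Right options of a game. -/
def Gm.rightOpts : Gm → List Gm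
  | .node _ r => r

/-- Disjunctive sum of games. -/
def Gm.add : Gm → Gm → Gm
  | .node gl gr, .node hl hr =>
      .node
        (gl.attach.map (fun g => Gm.add g.1 (.node hl hr)) ++
         hl.attach.map (fun h => Gm.add (.node gl gr) h.1))
        (gr.attach.map (fun g => Gm.add g.1 (.node hl hr)) ++
         hr.attach.map (fun h => Gm.add (.node gl gr) h.1))
termination_by g h => sizeOf g + sizeOf h
decreasing_by
  all_goals first
  | (have := List.sizeOf_lt_of_mem g.2; simp; omega)
  | (have := List.sizeOf_lt_of_mem h.2; simp; omega)

mutual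
/-- Left, moving first, wins `G` under misère play (a player unable to move wins):
`G` is a Left end, or some Left option is a loss for Right moving first. -/
def Gm.lwins : Gm → Prop
  | .node l _ => l = [] ∨ ∃ g ∈ l.attach, ¬ Gm.rwins g.1
termination_by G => sizeOf G
decreasing_by have := List.sizeOf_lt_of_mem g.2; simp; omega

/-- Right, moving first, wins `G` under misère play. -/
def Gm.rwins : Gm → Prop
  | .node _ r => r = [] ∨ ∃ g ∈ r.attach, ¬ Gm.lwins g.1
termination_by G => sizeOf G
decreasing_by have := List.sizeOf_lt_of_mem g.2; simp; omega
end

/-- The game `0`. -/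
def Gm.zero : Gm := .node [] []

/-- The game `* = {0|0}`. -/
def Gm.star : Gm := .node [Gm.zero] [Gm.zero]

/-- `G` is a Left dead-end: `G` has no Left options, and every subposition
likewise has no Left options. -/
inductive Gm.IsLDE : Gm → Prop
  | mk (r : List Gm) : (∀ g ∈ r, Gm.IsLDE g) → Gm.IsLDE (.node [] r)

/-- The dead-end order on Left dead-ends: `G ≥ H` iff every Right option of `G`
is `≥` some Right option of `H`, and `G` having no Right options implies the
same of `H`. -/
def Gm.DGe : Gm → Gm → Prop
  | .node _ gr, .node _ hr =>
      (∀ g ∈ gr, ∃ h ∈ hr, Gm.DGe g h) ∧ (gr = [] → hr = [])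
termination_by G _ => sizeOf G
decreasing_by
  have := List.sizeOf_lt_of_mem ‹g ∈ gr›; simp; omega

/-- The formal birthday (height of the game tree). -/
def Gm.fb : Gm → ℕ
  | .node l r =>
      max (l.attach.foldr (fun g m => max (Gm.fb g.1 + 1) m) 0)
          (r.attach.foldr (fun g m => max (Gm.fb g.1 + 1) m) 0)
termination_by G => sizeOf G
decreasing_by
  all_goals (have := List.sizeOf_lt_of_mem g.2; simp; omega)

/-- The `n`-th truncation: stop play after `n` moves. -/
def Gm.trunc : ℕ → Gm → Gm
  | 0, _ => Gm.zero
  | n+1, .node l r => .node (l.map (Gm.trunc n)) (r.map (Gm.trunc n))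

/-- The additive-hereditary closure `cl(A)`: the smallest set containing `A`
that is hereditarily closed and closed under disjunctive sum. Its elements are
exactly the Left ends of the universe `D(A)`. -/
inductive Gm.cl (A : Set Gm) : Gm → Prop
  | base {X} : X ∈ A → Gm.cl A X
  | leftOpt {X g} : Gm.cl A X → g ∈ X.leftOpts → Gm.cl A g
  | rightOpt {X g} : Gm.cl A X → g ∈ X.rightOpts → Gm.cl A g
  | add {X Y} : Gm.cl A X → Gm.cl A Y → Gm.cl A (X.add Y)

/-!
Left never has a move in a dead-end `X`, so in `G + X` she moves only in `G`, at most `n = fb G`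
times, and Left's turn with no move is a win for her. Only the first `n` Right moves in `X` can
matter, so Left's outcome moving first is unchanged when `X` is replaced by its truncation
`τ_n(X)`. That outcome is also monotone along the dead-end order: if `X ≥ Y`, every Right move in
`X` is answered by a Right move in `Y`, so Left wins `G + X` whenever she wins `G + Y`. Finally,
up to dead-end equivalence, `τ_n(X)` is determined by the set of classes of its Right options, so
there are finitely many classes and every `τ_n(X)` lies above a minimal one, i.e. a test game.
-/

lemma List.le_foldr_max {α : Type*} (f : α → ℕ) {L : List α} {a : α} (ha : a ∈ L) :
    f a ≤ L.foldr (fun x m => max (f x) m) 0 := by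
  induction L with
  | nil => cases ha
  | cons b L ih =>
    rcases List.mem_cons.mp ha with rfl | ha
    · exact le_max_left _ _
    · exact le_max_of_le_right (ih ha)

namespace Gm

lemma leftOpts_add (X Y : Gm) :
    (X.add Y).leftOpts = X.leftOpts.map (·.add Y) ++ Y.leftOpts.map (X.add ·) := by
  cases X; cases Y
  rw [add]
  simp [leftOpts]

lemma rightOpts_add (X Y : Gm) :
    (X.add Y).rightOpts = X.rightOpts.map (·.add Y) ++ Y.rightOpts.map (X.add ·) := by
  cases X; cases Y
  rw [add]
  simp [rightOpts]

lemma leftOpts_trunc_succ (n : ℕ) (X : Gm) :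
    (X.trunc (n + 1)).leftOpts = X.leftOpts.map (trunc n) := by
  cases X; rfl

lemma rightOpts_trunc_succ (n : ℕ) (X : Gm) :
    (X.trunc (n + 1)).rightOpts = X.rightOpts.map (trunc n) := by
  cases X; rfl

lemma lwins_iff (G : Gm) : G.lwins ↔ G.leftOpts = [] ∨ ∃ g ∈ G.leftOpts, ¬ g.rwins := by
  cases G
  rw [lwins]
  simp [leftOpts]

lemma rwins_iff (G : Gm) : G.rwins ↔ G.rightOpts = [] ∨ ∃ g ∈ G.rightOpts, ¬ g.lwins := by
  cases G
  rw [rwins]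
  simp [rightOpts]

lemma dGe_iff (G H : Gm) :
    G.DGe H ↔ (∀ g ∈ G.rightOpts, ∃ h ∈ H.rightOpts, g.DGe h) ∧
      (G.rightOpts = [] → H.rightOpts = []) := by
  cases G; cases H
  rw [DGe]
  rfl

lemma isLDE_iff (X : Gm) : X.IsLDE ↔ X.leftOpts = [] ∧ ∀ g ∈ X.rightOpts, g.IsLDE := by
  constructor
  · rintro ⟨r, h⟩
    exact ⟨rfl, h⟩
  · cases X
    rintro ⟨rfl, h⟩
    exact .mk _ h

lemma sizeOf_lt_of_mem_leftOpts {g G : Gm} (hg : g ∈ G.leftOpts) : sizeOf g < sizeOf G := by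
  cases G
  have := List.sizeOf_lt_of_mem hg
  simp only [leftOpts] at this
  simp only [node.sizeOf_spec]
  omega

lemma sizeOf_lt_of_mem_rightOpts {g G : Gm} (hg : g ∈ G.rightOpts) : sizeOf g < sizeOf G := by
  cases G
  have := List.sizeOf_lt_of_mem hg
  simp only [rightOpts] at this
  simp only [node.sizeOf_spec]
  omega

lemma fb_lt_of_mem_leftOpts {g G : Gm} (hg : g ∈ G.leftOpts) : g.fb < G.fb := by
  cases G with | node l r =>
  rw [fb]
  exact lt_of_lt_of_le
    (List.le_foldr_max (fun x : {x // x ∈ l} => x.1.fb + 1) (List.mem_attach l ⟨g, hg⟩))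
    (le_max_left _ _)

lemma fb_lt_of_mem_rightOpts {g G : Gm} (hg : g ∈ G.rightOpts) : g.fb < G.fb := by
  cases G with | node l r =>
  rw [fb]
  exact lt_of_lt_of_le
    (List.le_foldr_max (fun x : {x // x ∈ r} => x.1.fb + 1) (List.mem_attach r ⟨g, hg⟩))
    (le_max_right _ _)

lemma IsLDE.leftOpts_eq_nil {X : Gm} (hX : X.IsLDE) : X.leftOpts = [] :=
  ((isLDE_iff X).1 hX).1

lemma IsLDE.of_mem_rightOpts {X g : Gm} (hX : X.IsLDE) (hg : g ∈ X.rightOpts) : g.IsLDE :=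
  ((isLDE_iff X).1 hX).2 g hg

lemma IsLDE.add {X Y : Gm} (hX : X.IsLDE) (hY : Y.IsLDE) : (X.add Y).IsLDE := by
  rw [isLDE_iff, leftOpts_add, rightOpts_add, hX.leftOpts_eq_nil, hY.leftOpts_eq_nil]
  refine ⟨rfl, ?_⟩
  simp only [List.mem_append, List.mem_map]
  rintro _ (⟨x, hx, rfl⟩ | ⟨y, hy, rfl⟩)
  · exact (hX.of_mem_rightOpts hx).add hY
  · exact hX.add (hY.of_mem_rightOpts hy)
termination_by sizeOf X + sizeOf Y
decreasing_by
  · have := sizeOf_lt_of_mem_rightOpts hx; omega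
  · have := sizeOf_lt_of_mem_rightOpts hy; omega

lemma IsLDE.trunc {X : Gm} (hX : X.IsLDE) (n : ℕ) : (X.trunc n).IsLDE := by
  induction n generalizing X with
  | zero => exact .mk [] (by simp)
  | succ n ih =>
    rw [isLDE_iff, leftOpts_trunc_succ, rightOpts_trunc_succ, hX.leftOpts_eq_nil]
    refine ⟨rfl, ?_⟩
    simp only [List.mem_map]
    rintro _ ⟨x, hx, rfl⟩
    exact ih (hX.of_mem_rightOpts hx)

lemma IsLDE.of_cl {A : Set Gm} (hA : ∀ X ∈ A, X.IsLDE) {X : Gm} (h : cl A X) : X.IsLDE := by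
  induction h with
  | base h => exact hA _ h
  | leftOpt _ hg ih => simp [ih.leftOpts_eq_nil] at hg
  | rightOpt _ hg ih => exact ih.of_mem_rightOpts hg
  | add _ _ ihX ihY => exact ihX.add ihY

lemma lwins_add_of_isLDE (G : Gm) {X : Gm} (hX : X.IsLDE) :
    (G.add X).lwins ↔ G.leftOpts = [] ∨ ∃ g ∈ G.leftOpts, ¬ (g.add X).rwins := by
  simp [lwins_iff, leftOpts_add, hX.leftOpts_eq_nil]

lemma rwins_add (G X : Gm) :
    (G.add X).rwins ↔ (G.rightOpts = [] ∧ X.rightOpts = []) ∨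
      (∃ g ∈ G.rightOpts, ¬ (g.add X).lwins) ∨ ∃ x ∈ X.rightOpts, ¬ (G.add x).lwins := by
  simp only [rwins_iff, rightOpts_add, List.append_eq_nil_iff, List.map_eq_nil_iff,
    List.mem_append, List.mem_map, or_and_right, exists_or, exists_exists_and_eq_and]

mutual

theorem lwins_add_trunc_iff {G X : Gm} (hX : X.IsLDE) {n : ℕ} (hn : G.fb ≤ n) :
    (G.add (X.trunc n)).lwins ↔ (G.add X).lwins := by
  rw [lwins_add_of_isLDE G (hX.trunc n), lwins_add_of_isLDE G hX]
  refine or_congr Iff.rfl (exists_congr fun g => and_congr_right fun hg => not_congr ?_)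
  exact rwins_add_trunc_iff hX (lt_of_lt_of_le (fb_lt_of_mem_leftOpts hg) hn)
termination_by (n, sizeOf G)
decreasing_by exact Prod.Lex.right _ (sizeOf_lt_of_mem_leftOpts hg)

theorem rwins_add_trunc_iff {G X : Gm} (hX : X.IsLDE) {n : ℕ} (hn : G.fb < n) :
    (G.add (X.trunc n)).rwins ↔ (G.add X).rwins := by
  obtain ⟨m, rfl⟩ : ∃ m, n = m + 1 := Nat.exists_eq_succ_of_ne_zero (by omega)
  rw [rwins_add, rwins_add, rightOpts_trunc_succ]
  simp only [List.map_eq_nil_iff, List.mem_map, exists_exists_and_eq_and]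
  refine or_congr Iff.rfl (or_congr ?_ ?_)
  · refine exists_congr fun g => and_congr_right fun hg => not_congr ?_
    exact lwins_add_trunc_iff hX (le_of_lt (lt_trans (fb_lt_of_mem_rightOpts hg) hn))
  · refine exists_congr fun x => and_congr_right fun hx => not_congr ?_
    exact lwins_add_trunc_iff (hX.of_mem_rightOpts hx) (Nat.lt_succ_iff.mp hn)
termination_by (n, sizeOf G)
decreasing_by
  all_goals subst_vars
  · exact Prod.Lex.right _ (sizeOf_lt_of_mem_rightOpts hg)
  · exact Prod.Lex.left _ _ (Nat.lt_succ_self m)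

end

mutual

theorem lwins_add_of_dGe {G Y Z : Gm} (hY : Y.IsLDE) (hZ : Z.IsLDE) (hYZ : Y.DGe Z) :
    (G.add Z).lwins → (G.add Y).lwins := by
  rw [lwins_add_of_isLDE G hY, lwins_add_of_isLDE G hZ]
  rintro (hG | ⟨g, hg, hgZ⟩)
  · exact Or.inl hG
  · exact Or.inr ⟨g, hg, mt (rwins_add_of_dGe hY hZ hYZ) hgZ⟩
termination_by sizeOf G + sizeOf Y
decreasing_by have := sizeOf_lt_of_mem_leftOpts hg; omega

theorem rwins_add_of_dGe {G Y Z : Gm} (hY : Y.IsLDE) (hZ : Z.IsLDE) (hYZ : Y.DGe Z) :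
    (G.add Y).rwins → (G.add Z).rwins := by
  rw [rwins_add, rwins_add]
  obtain ⟨hmatch, hnil⟩ := (dGe_iff Y Z).1 hYZ
  rintro (⟨hG, hYnil⟩ | ⟨g, hg, hgY⟩ | ⟨y, hy, hGy⟩)
  · exact Or.inl ⟨hG, hnil hYnil⟩
  · exact Or.inr (Or.inl ⟨g, hg, mt (lwins_add_of_dGe hY hZ hYZ) hgY⟩)
  · obtain ⟨z, hz, hyz⟩ := hmatch y hy
    exact Or.inr (Or.inr ⟨z, hz,
      mt (lwins_add_of_dGe (hY.of_mem_rightOpts hy) (hZ.of_mem_rightOpts hz) hyz) hGy⟩)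
termination_by sizeOf G + sizeOf Y
decreasing_by
  · have := sizeOf_lt_of_mem_rightOpts hg; omega
  · have := sizeOf_lt_of_mem_rightOpts hy; omega

end

end Gm

/-- A dead-end truncated at depth `n`, up to equivalence, is the set of classes of its Right
options truncated at depth `n - 1`. -/
@[reducible] def TruncCode : ℕ → Type
  | 0 => Unit
  | n + 1 => Set (TruncCode n)

namespace TruncCode

instance finite : ∀ n, Finite (TruncCode n)
  | 0 => inferInstanceAs (Finite Unit)
  | n + 1 => have := finite n; inferInstanceAs (Finite (Set (TruncCode n)))

/-- The dead-end order on codes, oriented so that `Le n s t` means `t ≥ s`. -/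
def Le : (n : ℕ) → TruncCode n → TruncCode n → Prop
  | 0, _, _ => True
  | n + 1, s, t => (∀ b ∈ t, ∃ a ∈ s, Le n a b) ∧ (t = ∅ → s = ∅)

lemma le_refl : ∀ (n : ℕ) (s : TruncCode n), Le n s s
  | 0, _ => trivial
  | n + 1, _ => ⟨fun b hb => ⟨b, hb, le_refl n b⟩, id⟩

lemma le_trans : ∀ (n : ℕ) (s t u : TruncCode n), Le n s t → Le n t u → Le n s u
  | 0, _, _, _, _, _ => trivial
  | n + 1, _, _, _, hst, htu =>
    ⟨fun c hc =>
      have ⟨b, hb, hbc⟩ := htu.1 c hc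
      have ⟨a, ha, hab⟩ := hst.1 b hb
      ⟨a, ha, le_trans n a b c hab hbc⟩,
     fun hu => hst.2 (htu.2 hu)⟩

instance (n : ℕ) : Preorder (TruncCode n) where
  le := Le n
  le_refl := le_refl n
  le_trans := le_trans n

end TruncCode

namespace Gm

def truncCode : (n : ℕ) → Gm → TruncCode n
  | 0, _ => ()
  | n + 1, X => truncCode n '' {x | x ∈ X.rightOpts}

lemma dGe_trunc_iff (n : ℕ) (X Y : Gm) :
    (X.trunc n).DGe (Y.trunc n) ↔ Y.truncCode n ≤ X.truncCode n := by
  induction n generalizing X Y with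
  | zero => exact iff_of_true ((dGe_iff _ _).2 ⟨by simp [trunc, zero, rightOpts], id⟩) trivial
  | succ n ih =>
    rw [dGe_iff, rightOpts_trunc_succ, rightOpts_trunc_succ]
    change _ ↔ TruncCode.Le (n + 1) _ _
    simp only [TruncCode.Le, truncCode, Set.forall_mem_image, Set.exists_mem_image,
      List.mem_map, exists_exists_and_eq_and, forall_exists_index, and_imp,
      forall_apply_eq_imp_iff₂, List.map_eq_nil_iff, ih, Set.mem_ofPred_eq,
      Set.eq_empty_iff_forall_notMem, ← List.eq_nil_iff_forall_not_mem]
    rfl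

theorem exists_dGe_trunc_minimal (C : Set Gm) (n : ℕ) {X : Gm} (hX : X ∈ C) :
    ∃ X' ∈ C, (X.trunc n).DGe (X'.trunc n) ∧
      ∀ X'' ∈ C, (X'.trunc n).DGe (X''.trunc n) → (X''.trunc n).DGe (X'.trunc n) := by
  obtain ⟨_, hle, ⟨X', hX', rfl⟩, hmin⟩ :=
    (Set.toFinite (truncCode n '' C)).exists_le_minimal (Set.mem_image_of_mem _ hX)
  refine ⟨X', hX', (dGe_trunc_iff n X X').2 hle, fun X'' hX'' h => ?_⟩
  exact (dGe_trunc_iff n _ _).2 (hmin (Set.mem_image_of_mem _ hX'') ((dGe_trunc_iff n _ _).1 h))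

end Gm

/-- in the universe generated by a set `A` of Left dead-ends, `G`
is Left strong (Left wins moving first on `G + X` for every Left end `X` of the
universe) iff Left wins moving first on `G + Y` for every `Y` in the `n`-th
test set, `n = fb(G)`: the minimal elements (dead-end order) of
`{τ_n(X) : X ∈ cl(A)}`. -/
theorem stmt14 (A : Set Gm) (hA : ∀ X ∈ A, X.IsLDE) (G : Gm) :
    (∀ X : Gm, Gm.cl A X → Gm.lwins (G.add X)) ↔
    (∀ Y : Gm, (∃ X : Gm, Gm.cl A X ∧ Y = Gm.trunc G.fb X) →
      (∀ Z : Gm, (∃ X : Gm, Gm.cl A X ∧ Z = Gm.trunc G.fb X) →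
        Gm.DGe Y Z → Gm.DGe Z Y) →
      Gm.lwins (G.add Y)) := by
  constructor
  · rintro hstrong _ ⟨X, hX, rfl⟩ -
    exact (Gm.lwins_add_trunc_iff (.of_cl hA hX) le_rfl).2 (hstrong X hX)
  · intro htest X hX
    obtain ⟨X', hX', hXX', hmin⟩ := Gm.exists_dGe_trunc_minimal (Gm.cl A) G.fb hX
    have hX'wins : (G.add (X'.trunc G.fb)).lwins := by
      refine htest _ ⟨X', hX', rfl⟩ ?_
      rintro _ ⟨X'', hX'', rfl⟩
      exact hmin X'' hX''
    rw [← Gm.lwins_add_trunc_iff (.of_cl hA hX) le_rfl]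
    exact Gm.lwins_add_of_dGe ((Gm.IsLDE.of_cl hA hX).trunc _) ((Gm.IsLDE.of_cl hA hX').trunc _)
      hXX' hX'wins
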